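/- Let z be a submodular function on I and P a preorder on I. The face Φ_z(P) = {x ∈ Π(z) : x_A = z(A) for every down-set A of P} is nonempty if and only if P is compatible with z. In that case Φ_z(P) = Π(z_P). If moreover P conforms to z, then the dimension of this face equals |I| − |b(P)|, where |b(P)| is the number of bubbles of P. -/

import Mathlib

open scoped Classical

/-- A preorder on `X`, bundled as a reflexive and transitive relation. -/
structure Preo (X : Type*) where
  le : X → X → Prop
  le_refl : ∀ x, le x x
  le_trans : ∀ {x y z}, le x y → le y z → le x z

namespace Preo

variable {X : Type*}

/-- The refinement partial order `P ⪯ Q` on preorders: `x ≤_P y` implies `x ≤_Q y`. -/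
def Le (P Q : Preo X) : Prop := ∀ ⦃a b⦄, P.le a b → Q.le a b

/-- The opposite preorder. -/
def op (P : Preo X) : Preo X where
  le a b := P.le b a
  le_refl x := P.le_refl x
  le_trans h h' := P.le_trans h' h

/-- The meet (pointwise intersection) of two preorders. -/
def meet (P Q : Preo X) : Preo X where
  le a b := P.le a b ∧ Q.le a b
  le_refl x := ⟨P.le_refl x, Q.le_refl x⟩
  le_trans h h' := ⟨P.le_trans h.1 h'.1, Q.le_trans h.2 h'.2⟩

/-- The join of two preorders: zigzag chains, i.e. the reflexive-transitive closure
of the union of the two relations. -/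
def join (P Q : Preo X) : Preo X where
  le a b := Relation.ReflTransGen (fun u v => P.le u v ∨ Q.le u v) a b
  le_refl _ := Relation.ReflTransGen.refl
  le_trans h h' := Relation.ReflTransGen.trans h h'

/-- The bubble relation: `a` and `b` lie in the same bubble of `P`. -/
def bubRel (P : Preo X) (a b : X) : Prop := P.le a b ∧ P.le b a

/-- `R ◁ P` : `R` is a subdivision of `P`, i.e. `R ⪯ P` and `R = P ∧ (P^op ∨ R)`. -/
def Subdiv (R P : Preo X) : Prop := R.Le P ∧ R = P.meet (P.op.join R)

/-- `P ◀ Q` : `Q` is a contraction of `P`, i.e. `P ⪯ Q` and `Q = P ∨ (P^op ∧ Q)`. -/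
def Contr (P Q : Preo X) : Prop := P.Le Q ∧ Q = P.join (P.op.meet Q)

/-- `K` is a convex subset for the preorder `P`. -/
def ConvexIn (P : Preo X) (K : Set X) : Prop :=
  ∀ ⦃x y z⦄, x ∈ K → y ∈ K → P.le x z → P.le z y → z ∈ K

/-- `K` is connected for (the restriction to `K` of) the preorder `P`:
any two of its elements are joined by a zigzag chain of comparabilities within `K`. -/
def ConnectedIn (P : Preo X) (K : Set X) : Prop :=
  ∀ ⦃x y⦄, x ∈ K → y ∈ K →
    Relation.ReflTransGen (fun u v => u ∈ K ∧ v ∈ K ∧ (P.le u v ∨ P.le v u)) x y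

/-- A total preorder. -/
def Total (P : Preo X) : Prop := ∀ a b, P.le a b ∨ P.le b a

/-- `L` is a linear extension of `P`: `L` is total, `P ⪯ L`, and the bubbles coincide. -/
def IsLinExt (P L : Preo X) : Prop :=
  L.Total ∧ P.Le L ∧ ∀ a b, P.bubRel a b ↔ L.bubRel a b

/-- A finite down-set of the preorder `P`. -/
def IsDownset (P : Preo X) (A : Finset X) : Prop :=
  ∀ ⦃x y⦄, y ∈ A → P.le x y → x ∈ A

/-- A convex finite subset of the preorder `P`. -/
def ConvexF (P : Preo X) (C : Finset X) : Prop :=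
  ∀ ⦃x y z⦄, x ∈ C → y ∈ C → P.le x z → P.le z y → z ∈ C

/-- The down-set generated by a finite set `C`. -/
noncomputable def downClosure [Fintype X] (P : Preo X) (C : Finset X) : Finset X :=
  Finset.univ.filter (fun x => ∃ y ∈ C, P.le x y)

/-- The bubble of an element `a`. -/
noncomputable def bubble [Fintype X] (P : Preo X) (a : X) : Finset X :=
  Finset.univ.filter (fun x => P.le a x ∧ P.le x a)

/-- The set of bubbles of `P`. -/
noncomputable def bubbles [Fintype X] (P : Preo X) : Finset (Finset X) :=
  Finset.univ.image (fun a => P.bubble a)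

/-- `R` is a positive sub-preorder of `P`: in any loop
`x = x₀ ≤_R x₁ ≥_P x₂ ≤_R ⋯ ≤_R x_{2k-1} ≥_P x_{2k} = x`,
every descending step `≥_P` is actually `≥_R`. -/
def PositiveSub (R P : Preo X) : Prop :=
  ∀ (k : ℕ) (x : ℕ → X), x (2 * k) = x 0 →
    (∀ i < k, R.le (x (2 * i)) (x (2 * i + 1))) →
    (∀ i < k, P.le (x (2 * i + 2)) (x (2 * i + 1))) →
    ∀ i < k, R.le (x (2 * i + 2)) (x (2 * i + 1))

end Preo

section Submod

variable {I : Type*} [Fintype I] [DecidableEq I]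

/-- A function `z : P(I) → ℝ ∪ {∞}` is submodular if
`z(S ∪ T) + z(S ∩ T) ≤ z(S) + z(T)` for all `S, T`. -/
def Submodular (z : Finset I → WithTop ℝ) : Prop :=
  ∀ S T : Finset I, z (S ∪ T) + z (S ∩ T) ≤ z S + z T

/-- The corestriction `z_{/A}` : `U ↦ z(A ∪ U) − z(A)` (meaningful when `z A ≠ ⊤`). -/
noncomputable def coRes (z : Finset I → WithTop ℝ) (A U : Finset I) : WithTop ℝ :=
  z (A ∪ U) + ((-(z A).untopD 0 : ℝ) : WithTop ℝ)

/-- The extended generalized permutahedron of `z`: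
`x_I = z(I)` and `x_A ≤ z(A)` whenever `z(A) < ∞`. -/
def EGP (z : Finset I → WithTop ℝ) : Set (I → ℝ) :=
  {x | ((∑ i, x i : ℝ) : WithTop ℝ) = z Finset.univ ∧
       ∀ A : Finset I, ((∑ i ∈ A, x i : ℝ) : WithTop ℝ) ≤ z A}

/-- `z` restricted to subsets of `C` decomposes as the product of its restrictions to `S`
and `T`, where `C = S ⊔ T`. -/
def SplitsAlong (z : Finset I → WithTop ℝ) (C S T : Finset I) : Prop :=
  Disjoint S T ∧ S ∪ T = C ∧ ∀ E ⊆ C, z E = z (E ∩ S) + z (E ∩ T)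

/-- `z` restricted to subsets of `C` is indecomposable. -/
def IndecompOn (z : Finset I → WithTop ℝ) (C : Finset I) : Prop :=
  ∀ S T : Finset I, S.Nonempty → T.Nonempty → ¬ SplitsAlong z C S T

/-- `fam` is the partition underlying a factorization of `z` into indecomposable
extended Boolean functions. -/
def IsIndecompFactorization (z : Finset I → WithTop ℝ) (fam : Finset (Finset I)) : Prop :=
  (∀ B ∈ fam, B.Nonempty) ∧
  (∀ B ∈ fam, ∀ B' ∈ fam, B ≠ B' → Disjoint B B') ∧
  fam.sup id = Finset.univ ∧
  (∀ E : Finset I, z E = ∑ B ∈ fam, z (E ∩ B)) ∧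
  ∀ B ∈ fam, IndecompOn z B

/-- A family of finite subsets of `I` forming a topology on `I`. -/
def IsTopologyFam (F : Set (Finset I)) : Prop :=
  ∅ ∈ F ∧ Finset.univ ∈ F ∧ (∀ A ∈ F, ∀ B ∈ F, A ∪ B ∈ F) ∧ ∀ A ∈ F, ∀ B ∈ F, A ∩ B ∈ F

/-- The preorder `P` is compatible with the submodular function `z`. -/
def Compatible (z : Finset I → WithTop ℝ) (P : Preo I) : Prop :=
  (∀ A : Finset I, P.IsDownset A → z A ≠ ⊤) ∧
  ∀ A B : Finset I, P.IsDownset A → P.IsDownset B → A ⊆ B →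
    ∀ C₁ C₂ : Finset I, Disjoint C₁ C₂ → C₁ ∪ C₂ = B \ A →
      (∀ x ∈ C₁, ∀ y ∈ C₂, ¬ P.le x y ∧ ¬ P.le y x) →
      ∀ U ⊆ B \ A, coRes z A U = coRes z A (U ∩ C₁) + coRes z A (U ∩ C₂)

/-- For a convex subset `C` of `P`, the function `z_C : U ↦ z(A ∪ U) − z(A)`, where
`A = (↓C) \ C` with `↓C` the down-set generated by `C`. -/
noncomputable def zConv (z : Finset I → WithTop ℝ) (P : Preo I) (C U : Finset I) :
    WithTop ℝ :=
  coRes z (P.downClosure C \ C) U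

/-- The preorder `P` conforms to the submodular function `z`: it is compatible with `z`
and every product decomposition of `z_C`, for `C` convex in `P`, comes from a
disconnected decomposition of the preorder induced on `C`. -/
def Conforms (z : Finset I → WithTop ℝ) (P : Preo I) : Prop :=
  Compatible z P ∧
  ∀ C : Finset I, P.ConvexF C →
    ∀ C₁ C₂ : Finset I, Disjoint C₁ C₂ → C₁ ∪ C₂ = C →
      (∀ U ⊆ C, zConv z P C U = zConv z P C (U ∩ C₁) + zConv z P C (U ∩ C₂)) →
      ∀ x ∈ C₁, ∀ y ∈ C₂, ¬ P.le x y ∧ ¬ P.le y x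

/-- The preorder `pre(z)` associated to `z`: `x ≤ y` iff every `A` with `z(A) < ∞`
("open set") containing `y` contains `x`. -/
def preZ (z : Finset I → WithTop ℝ) : Preo I where
  le x y := ∀ A : Finset I, z A ≠ ⊤ → y ∈ A → x ∈ A
  le_refl _ := fun _ _ h => h
  le_trans h h' := fun A hA hy => h A hA (h' A hA hy)

/-- The preorder associated (by the Alexandroff correspondence) to a family of subsets. -/
def preOfFam (F : Set (Finset I)) : Preo I where
  le x y := ∀ A ∈ F, y ∈ A → x ∈ A
  le_refl _ := fun _ _ h => h
  le_trans h h' := fun A hA hy => h A hA (h' A hA hy)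

/-- `Alin(P, z)`: the affine space cut out by `x_A = z(A)` for `A` a down-set of `P`. -/
def Alin (z : Finset I → WithTop ℝ) (P : Preo I) : Set (I → ℝ) :=
  {x | ∀ A : Finset I, P.IsDownset A → ((∑ i ∈ A, x i : ℝ) : WithTop ℝ) = z A}

/-- `AlinBu(P, z)`: the affine space cut out by `x_C = z_C(C)` for `C` a bubble of `P`. -/
def AlinBu (z : Finset I → WithTop ℝ) (P : Preo I) : Set (I → ℝ) :=
  {x | ∀ a : I, ((∑ i ∈ P.bubble a, x i : ℝ) : WithTop ℝ) = zConv z P (P.bubble a) (P.bubble a)}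

/-- `Φ_z(P)`: the (possibly empty) face of `Π(z)` cut out by the equalities `x_A = z(A)`
for `A` a down-set of `P`. -/
def Phi (z : Finset I → WithTop ℝ) (P : Preo I) : Set (I → ℝ) :=
  {x | x ∈ EGP z ∧ ∀ A : Finset I, P.IsDownset A → ((∑ i ∈ A, x i : ℝ) : WithTop ℝ) = z A}

/-- `Ψ_z(G)`: the family of sets `A` with `z(A) < ∞` on which `x_A = z(A)` for all `x ∈ G`. -/
def PsiFam (z : Finset I → WithTop ℝ) (G : Set (I → ℝ)) : Set (Finset I) :=
  {A | z A ≠ ⊤ ∧ ∀ x ∈ G, ((∑ i ∈ A, x i : ℝ) : WithTop ℝ) = z A}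

/-- `Ψ_z(G)` as a preorder. -/
def PsiPre (z : Finset I → WithTop ℝ) (G : Set (I → ℝ)) : Preo I :=
  preOfFam (PsiFam z G)

/-- `z_P = ∏_{C ∈ b(P)} z_C`: the product over all bubbles of `P`. -/
noncomputable def zP (z : Finset I → WithTop ℝ) (P : Preo I) : Finset I → WithTop ℝ :=
  fun E => ∑ C ∈ P.bubbles, zConv z P C (E ∩ C)

/-- The restriction `z|_S` of `z` to subsets of `S`. -/
def restrictFn (z : Finset I → WithTop ℝ) (S : Finset I) :
    Finset {x : I // x ∈ S} → WithTop ℝ :=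
  fun U => z (U.map (Function.Embedding.subtype fun x => x ∈ S))

/-- The corestriction `z_{/S}` of `z`, on subsets of `I ∖ S`. -/
noncomputable def coresFn (z : Finset I → WithTop ℝ) (S : Finset I) :
    Finset {x : I // x ∉ S} → WithTop ℝ :=
  fun U => z (S ∪ U.map (Function.Embedding.subtype fun x => x ∉ S)) +
    ((-(z S).untopD 0 : ℝ) : WithTop ℝ)

/-- The restriction `P|_S` of a preorder to `S`. -/
def restrictPre (P : Preo I) (S : Finset I) : Preo {x : I // x ∈ S} where
  le a b := P.le a b
  le_refl a := P.le_refl a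
  le_trans h h' := P.le_trans h h'

/-- The corestriction `P_{/S}` of a preorder, on `I ∖ S`. -/
def coresPre (P : Preo I) (S : Finset I) : Preo {x : I // x ∉ S} where
  le a b := P.le a b
  le_refl a := P.le_refl a
  le_trans h h' := P.le_trans h h'

end Submod

/-!
A point `x` of `Φ_z(P)` is tight on the down-sets `A ⊆ A ∪ C₁, A ∪ C₂ ⊆ B`, so `z_{B/A}` is
modular on the disjoint pair `C₁, C₂`; submodularity propagates this to every subset of
`C₁ ⊔ C₂`, which is compatibility. Conversely, compatibility lets one peel maximal bubbles off
a down-set: `z_C` may be computed relative to any down-set below `C`. This shows that `z_P`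
agrees with `z` on down-sets and lies below `z` everywhere, whence `Φ_z(P) = Π(z_P)`. This
polytope is nonempty by the greedy algorithm, run on a real-valued truncation of `z_P`.

For the dimension, the sum of `x` over each bubble is constant on `Π(z_P)`. Conversely, a set
`S` on which all of `Π(z_P)` is tight splits `z_P` along `S` and its complement; if `S`
separated two elements of a bubble `C`, it would split `z_C`, which conformity forbids. So for
`i, j` in one bubble some point of `Π(z_P)` has slack on every set containing `i` but not `j`,
and it can be moved in the direction `eᵢ - eⱼ`.
-/

open Finset

namespace Preo

section

variable {I : Type*} (P : Preo I)

lemma exists_maximal {D : Finset I} (hD : D.Nonempty) :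
    ∃ a ∈ D, ∀ y ∈ D, P.le a y → P.le y a := by
  let _ : LE I := ⟨P.le⟩
  have _ : IsTrans I (· ≤ ·) := ⟨fun _ _ _ => P.le_trans⟩
  obtain ⟨a, ha, hmax⟩ := Finset.exists_maximal hD
  exact ⟨a, ha, fun y hy => hmax hy⟩

variable {P}

lemma IsDownset.union_of_disconnected [DecidableEq I] {A B C₁ C₂ : Finset I}
    (hA : P.IsDownset A) (hB : P.IsDownset B) (hun : C₁ ∪ C₂ = B \ A)
    (hnorel : ∀ x ∈ C₁, ∀ y ∈ C₂, ¬ P.le y x) : P.IsDownset (A ∪ C₁) := by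
  intro u y hy huy
  rcases mem_union.1 hy with hyA | hyC₁
  · exact mem_union_left _ (hA hyA huy)
  by_cases huA : u ∈ A
  · exact mem_union_left _ huA
  have hyB : y ∈ B := (mem_sdiff.1 (hun ▸ mem_union_left _ hyC₁)).1
  rcases mem_union.1 (hun ▸ mem_sdiff.2 ⟨hB hyB huy, huA⟩ : u ∈ C₁ ∪ C₂) with hu | hu
  · exact mem_union_right _ hu
  · exact absurd huy (hnorel y hyC₁ u hu)

end

variable {I : Type*} [Fintype I] (P : Preo I)

lemma mem_bubble {a x : I} : x ∈ P.bubble a ↔ P.le a x ∧ P.le x a := by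
  simp [bubble]

lemma self_mem_bubble (a : I) : a ∈ P.bubble a :=
  P.mem_bubble.2 ⟨P.le_refl a, P.le_refl a⟩

lemma mem_bubble_comm {a x : I} : x ∈ P.bubble a ↔ a ∈ P.bubble x := by
  simp only [mem_bubble, and_comm]

lemma bubble_eq_of_mem {a b : I} (h : b ∈ P.bubble a) : P.bubble b = P.bubble a := by
  rw [mem_bubble] at h
  ext x
  simp only [mem_bubble]
  exact ⟨fun hx => ⟨P.le_trans h.1 hx.1, P.le_trans hx.2 h.2⟩,
    fun hx => ⟨P.le_trans h.2 hx.1, P.le_trans hx.2 h.1⟩⟩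

lemma disjoint_bubble {a b : I} (h : P.bubble a ≠ P.bubble b) :
    Disjoint (P.bubble a) (P.bubble b) :=
  disjoint_left.2 fun _ hxa hxb =>
    h ((P.bubble_eq_of_mem hxa).symm.trans (P.bubble_eq_of_mem hxb))

lemma convexF_bubble (a : I) : P.ConvexF (P.bubble a) := by
  intro x y u hx hy hxu huy
  rw [mem_bubble] at hx hy ⊢
  exact ⟨P.le_trans hx.1 hxu, P.le_trans huy hy.2⟩

lemma mem_bubbles {C : Finset I} : C ∈ P.bubbles ↔ ∃ a, P.bubble a = C := by
  simp [bubbles]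

lemma bubble_mem_bubbles (a : I) : P.bubble a ∈ P.bubbles :=
  P.mem_bubbles.2 ⟨a, rfl⟩

lemma sum_bubbles_inter [DecidableEq I] {M : Type*} [AddCommMonoid M] (f : I → M) (E : Finset I) :
    ∑ C ∈ P.bubbles, ∑ i ∈ E ∩ C, f i = ∑ i ∈ E, f i := by
  rw [← sum_fiberwise_of_maps_to (g := P.bubble) (fun i _ => P.bubble_mem_bubbles i)]
  refine sum_congr rfl fun C hC => ?_
  obtain ⟨a, rfl⟩ := P.mem_bubbles.1 hC
  congr 1
  ext t
  simp only [mem_inter, mem_filter]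
  exact and_congr_right fun _ => ⟨P.bubble_eq_of_mem, fun h => h ▸ P.self_mem_bubble t⟩

lemma mem_downClosure {C : Finset I} {x : I} : x ∈ P.downClosure C ↔ ∃ y ∈ C, P.le x y := by
  simp [downClosure]

lemma isDownset_downClosure (C : Finset I) : P.IsDownset (P.downClosure C) := by
  intro x y hy hxy
  obtain ⟨c, hc, hyc⟩ := P.mem_downClosure.1 hy
  exact P.mem_downClosure.2 ⟨c, hc, P.le_trans hxy hyc⟩

lemma isDownset_downClosure_sdiff_bubble [DecidableEq I] (a : I) :
    P.IsDownset (P.downClosure (P.bubble a) \ P.bubble a) := by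
  intro x y hy hxy
  rw [mem_sdiff] at hy ⊢
  refine ⟨P.isDownset_downClosure _ hy.1 hxy, fun hx => hy.2 ?_⟩
  obtain ⟨c, hc, hyc⟩ := P.mem_downClosure.1 hy.1
  exact P.mem_bubble.2 ⟨P.le_trans (P.mem_bubble.1 hx).1 hxy, P.le_trans hyc (P.mem_bubble.1 hc).2⟩

lemma isDownset_univ : P.IsDownset (univ : Finset I) :=
  fun x _ _ _ => mem_univ x

variable {P}

lemma IsDownset.bubble_subset {A : Finset I} (hA : P.IsDownset A) {a : I} (ha : a ∈ A) :
    P.bubble a ⊆ A :=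
  fun _ hx => hA ha (P.mem_bubble.1 hx).2

lemma IsDownset.disjoint_bubble {D : Finset I} (hD : P.IsDownset D) {a : I} (ha : a ∉ D) :
    Disjoint D (P.bubble a) :=
  disjoint_right.2 fun _ hx hxD => ha (hD hxD (P.mem_bubble.1 hx).1)

theorem IsDownset.induction [DecidableEq I] {motive : Finset I → Prop} (empty : motive ∅)
    (step : ∀ D a, P.IsDownset D → P.IsDownset (D ∪ P.bubble a) → a ∉ D →
      motive D → motive (D ∪ P.bubble a))
    {D : Finset I} (hD : P.IsDownset D) : motive D := by
  induction D using Finset.strongInduction with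
  | H D ih =>
  rcases D.eq_empty_or_nonempty with rfl | hne
  · exact empty
  obtain ⟨a, haD, hmax⟩ := P.exists_maximal hne
  have hsub : P.bubble a ⊆ D := hD.bubble_subset haD
  have hD' : P.IsDownset (D \ P.bubble a) := by
    intro x y hy hxy
    rw [mem_sdiff] at hy ⊢
    refine ⟨hD hy.1 hxy, fun hx => hy.2 ?_⟩
    have hay : P.le a y := P.le_trans (P.mem_bubble.1 hx).1 hxy
    exact P.mem_bubble.2 ⟨hay, hmax y hy.1 hay⟩
  have h := step _ a hD' (by rwa [sdiff_union_of_subset hsub])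
    (fun h => (mem_sdiff.1 h).2 (P.self_mem_bubble a))
    (ih _ (sdiff_ssubset hsub ⟨a, P.self_mem_bubble a⟩) hD')
  rwa [sdiff_union_of_subset hsub] at h

end Preo

section Submodular

variable {I : Type*} [DecidableEq I] {w z : Finset I → WithTop ℝ}

lemma Submodular.add_const (hw : Submodular w) (c : WithTop ℝ) :
    Submodular fun U => w U + c := by
  intro S T
  calc w (S ∪ T) + c + (w (S ∩ T) + c) = w (S ∪ T) + w (S ∩ T) + (c + c) :=
        add_add_add_comm ..
    _ ≤ w S + w T + (c + c) := add_le_add_left (hw S T) _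
    _ = w S + c + (w T + c) := add_add_add_comm ..

lemma Submodular.comp_union (hw : Submodular w) (A : Finset I) :
    Submodular fun U => w (A ∪ U) := by
  intro S T
  have h := hw (A ∪ S) (A ∪ T)
  rwa [← union_union_distrib_left, ← union_inter_distrib_left] at h

lemma Submodular.comp_inter (hw : Submodular w) (C : Finset I) :
    Submodular fun U => w (U ∩ C) := by
  intro S T
  have h := hw (S ∩ C) (T ∩ C)
  rwa [← union_inter_distrib_right, ← inter_inter_distrib_right] at h

lemma Submodular.sum {ι : Type*} (s : Finset ι) {w : ι → Finset I → WithTop ℝ}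
    (hw : ∀ i ∈ s, Submodular (w i)) : Submodular fun U => ∑ i ∈ s, w i U := by
  intro S T
  rw [← sum_add_distrib, ← sum_add_distrib]
  exact sum_le_sum fun i hi => hw i hi S T

lemma submodular_coRes (hz : Submodular z) (A : Finset I) : Submodular (coRes z A) :=
  (hz.comp_union A).add_const _

theorem Submodular.splitsAlong_of_modular (hw : Submodular w) (hw0 : w ∅ = 0)
    {C₁ C₂ : Finset I} (hd : Disjoint C₁ C₂) (hmod : w (C₁ ∪ C₂) = w C₁ + w C₂)
    (hfin : w (C₁ ∪ C₂) ≠ ⊤) : SplitsAlong w (C₁ ∪ C₂) C₁ C₂ := by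
  refine ⟨hd, rfl, fun U hU => ?_⟩
  have h₀ : w U ≤ w (U ∩ C₁) + w (U ∩ C₂) := by
    have h := hw (U ∩ C₁) (U ∩ C₂)
    rwa [← inter_union_distrib_left, inter_eq_left.2 hU,
      disjoint_iff_inter_eq_empty.1 (hd.mono inter_subset_right inter_subset_right), hw0,
      add_zero] at h
  have h₁ : w (C₁ ∪ U ∩ C₂) + w (U ∩ C₁) ≤ w U + w C₁ := by
    have h := hw U C₁
    rwa [show U ∪ C₁ = C₁ ∪ U ∩ C₂ by rw [union_inter_distrib_left,
      inter_eq_left.2 (union_subset subset_union_left hU), union_comm]] at h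
  have h₂ : w C₁ + w C₂ + w (U ∩ C₂) ≤ w (C₁ ∪ U ∩ C₂) + w C₂ := by
    have h := hw (C₁ ∪ U ∩ C₂) C₂
    rwa [union_assoc, union_eq_right.2 inter_subset_right, hmod, union_inter_distrib_right,
      disjoint_iff_inter_eq_empty.1 hd, empty_union, inter_assoc, inter_self] at h
  obtain ⟨hC₁, hC₂⟩ := WithTop.add_ne_top.1 (hmod ▸ hfin)
  rcases eq_or_ne (w U) ⊤ with hUtop | hUfin
  · rw [hUtop, top_le_iff] at h₀
    rw [hUtop, h₀]
  lift w C₁ to ℝ using hC₁ with c₁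
  lift w C₂ to ℝ using hC₂ with c₂
  lift w U to ℝ using hUfin with u
  obtain ⟨hm, ha⟩ := WithTop.add_ne_top.1 (ne_top_of_le_ne_top (by simp) h₁)
  lift w (C₁ ∪ U ∩ C₂) to ℝ using hm with m
  lift w (U ∩ C₁) to ℝ using ha with a
  obtain ⟨-, hb⟩ := WithTop.add_ne_top.1 (ne_top_of_le_ne_top (by simp) h₂)
  lift w (U ∩ C₂) to ℝ using hb with b
  norm_cast at h₀ h₁ h₂ ⊢
  linarith

lemma coRes_eq_add_coe {A : Finset I} {a : ℝ} (ha : z A = a) (U : Finset I) :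
    coRes z A U = z (A ∪ U) + ((-a : ℝ) : WithTop ℝ) := by
  rw [coRes, ha, WithTop.untopD_coe]

lemma add_coRes {A : Finset I} (hA : z A ≠ ⊤) (U : Finset I) : z A + coRes z A U = z (A ∪ U) := by
  lift z A to ℝ using hA with a ha
  rw [coRes_eq_add_coe ha.symm, add_left_comm, ← WithTop.coe_add, add_neg_cancel,
    WithTop.coe_zero, add_zero]

lemma coRes_eq_iff {A U : Finset I} (hA : z A ≠ ⊤) {v : WithTop ℝ} :
    coRes z A U = v ↔ z (A ∪ U) = z A + v := by
  rw [← add_coRes hA U, WithTop.add_left_inj hA, eq_comm]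

lemma coRes_empty {A : Finset I} (hA : z A ≠ ⊤) : coRes z A ∅ = 0 := by
  rw [coRes_eq_iff hA, union_empty, add_zero]

lemma coRes_union {A X : Finset I} (hA : z A ≠ ⊤) (hAX : z (A ∪ X) ≠ ⊤) (U : Finset I) :
    coRes z A (X ∪ U) = coRes z A X + coRes z (A ∪ X) U := by
  rw [coRes_eq_iff hA, ← add_assoc, add_coRes hA, add_coRes hAX, union_assoc]

lemma coRes_eq_coe_sum {x : I → ℝ} {A U : Finset I} (hA : ((∑ i ∈ A, x i : ℝ) : WithTop ℝ) = z A)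
    (hAU : ((∑ i ∈ A ∪ U, x i : ℝ) : WithTop ℝ) = z (A ∪ U)) (hd : Disjoint A U) :
    coRes z A U = ((∑ i ∈ U, x i : ℝ) : WithTop ℝ) := by
  rw [coRes_eq_iff (hA ▸ WithTop.coe_ne_top), ← hAU, ← hA, sum_union hd, WithTop.coe_add]

lemma coe_sum_le_coRes {x : I → ℝ} {A U : Finset I}
    (hA : ((∑ i ∈ A, x i : ℝ) : WithTop ℝ) = z A)
    (hAU : ((∑ i ∈ A ∪ U, x i : ℝ) : WithTop ℝ) ≤ z (A ∪ U)) (hd : Disjoint A U) :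
    ((∑ i ∈ U, x i : ℝ) : WithTop ℝ) ≤ coRes z A U := by
  have hAfin : z A ≠ ⊤ := hA ▸ WithTop.coe_ne_top
  rwa [← WithTop.add_le_add_iff_left hAfin, add_coRes hAfin, ← hA, ← WithTop.coe_add,
    ← sum_union hd]

lemma Submodular.add_coRes_le (hz : Submodular z) {D Y V : Finset I} (hD : z D ≠ ⊤)
    (hY : Y ⊆ D) (hV : Disjoint D V) : z Y + coRes z D V ≤ z (Y ∪ V) := by
  rw [← WithTop.add_le_add_iff_left hD, add_left_comm, add_coRes hD, add_comm (z Y)]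
  have hDV : D ∩ (Y ∪ V) = Y := by
    rw [inter_union_distrib_left, inter_eq_right.2 hY, disjoint_iff_inter_eq_empty.1 hV,
      union_empty]
  simpa only [← union_assoc, union_eq_left.2 hY, hDV] using hz D (Y ∪ V)

end Submodular

section Compatible

variable {I : Type*} [Fintype I] [DecidableEq I] {z : Finset I → WithTop ℝ} {P : Preo I}

lemma Compatible.zConv_empty (hc : Compatible z P) (a : I) : zConv z P (P.bubble a) ∅ = 0 :=
  coRes_empty (hc.1 _ (P.isDownset_downClosure_sdiff_bubble a))

/-- A maximal bubble `C` on top of a down-set `D` is disconnected from `D ∖ (↓C ∖ C)`, so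
compatibility lets one compute `z_C` relative to `D` instead of `↓C ∖ C`. -/
lemma Compatible.zConv_eq_coRes (hc : Compatible z P) {D V : Finset I} {a : I}
    (hD : P.IsDownset D) (hDa : P.IsDownset (D ∪ P.bubble a)) (ha : a ∉ D)
    (hV : V ⊆ P.bubble a) : zConv z P (P.bubble a) V = coRes z D V := by
  set C := P.bubble a
  set A := P.downClosure C \ C
  have hAds : P.IsDownset A := P.isDownset_downClosure_sdiff_bubble a
  have hDC : Disjoint D C := hD.disjoint_bubble ha
  have hAD : A ⊆ D := by
    intro y hy
    obtain ⟨c, hc, hyc⟩ := P.mem_downClosure.1 (mem_sdiff.1 hy).1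
    exact (mem_union.1 (hDa (mem_union_right _ hc) hyc)).resolve_right (mem_sdiff.1 hy).2
  have hnorel : ∀ x ∈ C, ∀ y ∈ D \ A, ¬ P.le x y ∧ ¬ P.le y x := by
    intro x hx y hy
    obtain ⟨hyD, hyA⟩ := mem_sdiff.1 hy
    obtain ⟨hax, hxa⟩ := P.mem_bubble.1 hx
    refine ⟨fun hxy => ha (hD hyD (P.le_trans hax hxy)), fun hyx => hyA (mem_sdiff.2 ⟨?_, ?_⟩)⟩
    · exact P.mem_downClosure.2 ⟨a, P.self_mem_bubble a, P.le_trans hyx hxa⟩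
    · exact disjoint_left.1 hDC hyD
  have hun : C ∪ D \ A = (D ∪ C) \ A := by
    rw [union_sdiff_distrib, sdiff_eq_self_of_disjoint sdiff_disjoint.symm, union_comm]
  have hsplit := hc.2 A (D ∪ C) hAds hDa (hAD.trans subset_union_left) C (D \ A)
    (hDC.symm.mono_right sdiff_subset) hun hnorel (V ∪ D \ A)
    (hun ▸ union_subset_union_left hV)
  have hUC : (V ∪ D \ A) ∩ C = V := by
    rw [union_inter_distrib_right, inter_eq_left.2 hV,
      disjoint_iff_inter_eq_empty.1 (hDC.mono_left sdiff_subset), union_empty]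
  have hAD' : A ∪ D \ A = D := union_sdiff_of_subset hAD
  rw [hUC, inter_eq_right.2 subset_union_right, union_comm,
    coRes_union (hc.1 A hAds) (by rw [hAD']; exact hc.1 D hD), hAD', add_comm] at hsplit
  have hfin : coRes z A (D \ A) ≠ ⊤ := by
    have h := add_coRes (hc.1 A hAds) (D \ A)
    rw [hAD'] at h
    exact (WithTop.add_ne_top.1 (h ▸ hc.1 D hD)).2
  exact (WithTop.add_right_cancel hfin hsplit).symm

lemma zP_inter_add_sdiff (hc : Compatible z P) {D : Finset I} (hD : ∀ a ∈ D, P.bubble a ⊆ D)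
    (E : Finset I) : zP z P E = zP z P (E ∩ D) + zP z P (E \ D) := by
  rw [zP, zP, zP, ← sum_add_distrib]
  refine sum_congr rfl fun C hC => ?_
  obtain ⟨a, rfl⟩ := P.mem_bubbles.1 hC
  by_cases ha : a ∈ D
  · have hsub := hD a ha
    rw [show E \ D ∩ P.bubble a = ∅ by
        ext t; have := @hsub t; simp only [mem_inter, mem_sdiff, notMem_empty]; tauto,
      hc.zConv_empty, add_zero, inter_assoc, inter_eq_right.2 hsub]
  · have hout : ∀ t ∈ P.bubble a, t ∉ D := fun t ht htD =>
      ha (hD t htD (P.mem_bubble_comm.1 ht))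
    rw [show E ∩ D ∩ P.bubble a = ∅ by
        ext t; have := hout t; simp only [mem_inter, notMem_empty]; tauto,
      show E \ D ∩ P.bubble a = E ∩ P.bubble a by
        ext t; have := hout t; simp only [mem_inter, mem_sdiff]; tauto,
      hc.zConv_empty, zero_add]

lemma zP_of_subset_bubble (hc : Compatible z P) {a : I} {V : Finset I} (hV : V ⊆ P.bubble a) :
    zP z P V = zConv z P (P.bubble a) V := by
  rw [zP, sum_eq_single_of_mem _ (P.bubble_mem_bubbles a), inter_eq_left.2 hV]
  intro C hC hne
  obtain ⟨b, rfl⟩ := P.mem_bubbles.1 hC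
  rw [disjoint_iff_inter_eq_empty.1 ((P.disjoint_bubble hne.symm).mono_left hV),
    hc.zConv_empty]

lemma zP_union_bubble (hc : Compatible z P) {X V : Finset I} {a : I}
    (hX : Disjoint X (P.bubble a)) (hV : V ⊆ P.bubble a) :
    zP z P (X ∪ V) = zP z P X + zConv z P (P.bubble a) V := by
  have hout : ∀ t ∈ X, t ∉ P.bubble a := fun t ht => disjoint_left.1 hX ht
  rw [zP_inter_add_sdiff hc (D := P.bubble a) (fun b hb => (P.bubble_eq_of_mem hb).le),
    show (X ∪ V) ∩ P.bubble a = V by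
      ext t; have := hout t; have := @hV t; simp only [mem_inter, mem_union]; tauto,
    show (X ∪ V) \ P.bubble a = X by
      ext t; have := hout t; have := @hV t; simp only [mem_sdiff, mem_union]; tauto,
    zP_of_subset_bubble hc hV, add_comm]

lemma zP_empty (hc : Compatible z P) : zP z P ∅ = 0 :=
  sum_eq_zero fun C hC => by
    obtain ⟨a, rfl⟩ := P.mem_bubbles.1 hC
    rw [empty_inter, hc.zConv_empty]

lemma zP_eq_of_isDownset (hz0 : z ∅ = 0) (hc : Compatible z P) {D : Finset I}
    (hD : P.IsDownset D) : zP z P D = z D := by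
  refine Preo.IsDownset.induction (motive := fun D => zP z P D = z D) ?_ ?_ hD
  · rw [zP_empty hc, hz0]
  · intro D a hD hDa ha ih
    rw [zP_union_bubble hc (hD.disjoint_bubble ha) subset_rfl, ih,
      hc.zConv_eq_coRes hD hDa ha subset_rfl, add_coRes (hc.1 D hD)]

lemma zP_univ (hz0 : z ∅ = 0) (hc : Compatible z P) : zP z P univ = z univ :=
  zP_eq_of_isDownset hz0 hc P.isDownset_univ

lemma zP_le (hz0 : z ∅ = 0) (hsub : Submodular z) (hc : Compatible z P) (E : Finset I) :
    zP z P E ≤ z E := by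
  suffices ∀ D, P.IsDownset D → zP z P (E ∩ D) ≤ z (E ∩ D) by
    simpa using this univ P.isDownset_univ
  refine fun D => Preo.IsDownset.induction (motive := fun D => zP z P (E ∩ D) ≤ z (E ∩ D)) ?_ ?_
  · rw [inter_empty, zP_empty hc, hz0]
  · intro D a hD hDa ha ih
    rw [inter_union_distrib_left,
      zP_union_bubble hc ((hD.disjoint_bubble ha).mono_left inter_subset_right) inter_subset_right,
      hc.zConv_eq_coRes hD hDa ha inter_subset_right]
    calc zP z P (E ∩ D) + coRes z D (E ∩ P.bubble a)
        ≤ z (E ∩ D) + coRes z D (E ∩ P.bubble a) := add_le_add_left ih _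
      _ ≤ z (E ∩ D ∪ E ∩ P.bubble a) :=
        hsub.add_coRes_le (hc.1 D hD) inter_subset_right
          ((hD.disjoint_bubble ha).mono_right inter_subset_right)

lemma zP_submodular (hsub : Submodular z) : Submodular (zP z P) :=
  Submodular.sum P.bubbles fun C _ => (submodular_coRes hsub _).comp_inter C

end Compatible

section EGP

variable {I : Type*} [Fintype I] {w w' : Finset I → WithTop ℝ} {x : I → ℝ}

lemma sum_le_of_mem_EGP (hx : x ∈ EGP w) {S : Finset I} {s : ℝ} (hS : w S = s) :
    ∑ i ∈ S, x i ≤ s := by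
  have h := hx.2 S
  rw [hS] at h
  exact_mod_cast h

lemma EGP_mono (h : ∀ S, w S ≤ w' S) (huniv : w univ = w' univ) : EGP w ⊆ EGP w' :=
  fun _ hx => ⟨huniv ▸ hx.1, fun S => (hx.2 S).trans (h S)⟩

lemma coe_sum_eq_of_mem_EGP [DecidableEq I] (hx : x ∈ EGP w) {S : Finset I}
    (hS : w S + w Sᶜ = w univ) :
    ((∑ i ∈ S, x i : ℝ) : WithTop ℝ) = w S := by
  have huniv := hx.1
  obtain ⟨hSfin, hScfin⟩ := WithTop.add_ne_top.1 (hS ▸ huniv ▸ WithTop.coe_ne_top)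
  lift w S to ℝ using hSfin with s hs
  lift w Sᶜ to ℝ using hScfin with t ht
  rw [← hS, ← sum_add_sum_compl S x] at huniv
  have h₁ := sum_le_of_mem_EGP hx hs.symm
  have h₂ := sum_le_of_mem_EGP hx ht.symm
  norm_cast at huniv ⊢
  linarith

lemma convex_EGP (w : Finset I → WithTop ℝ) : Convex ℝ (EGP w) := by
  intro x hx y hy a b ha hb hab
  have hsum : ∀ S : Finset I, ∑ k ∈ S, (a • x + b • y) k = a * ∑ k ∈ S, x k + b * ∑ k ∈ S, y k :=
    fun S => by simp only [Pi.add_apply, Pi.smul_apply, smul_eq_mul, sum_add_distrib, mul_sum]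
  have key : ∀ S (s : ℝ), ∑ k ∈ S, x k ≤ s → ∑ k ∈ S, y k ≤ s →
      a * ∑ k ∈ S, x k + b * ∑ k ∈ S, y k ≤ s := fun S s h₁ h₂ => by
    have : a * s + b * s = s := by rw [← add_mul, hab, one_mul]
    linarith [mul_le_mul_of_nonneg_left h₁ ha, mul_le_mul_of_nonneg_left h₂ hb]
  refine ⟨?_, fun S => ?_⟩
  · have hx₁ := hx.1
    have hy₁ := hy.1
    lift w univ to ℝ using (hx₁ ▸ WithTop.coe_ne_top) with u hu
    norm_cast at hx₁ hy₁ ⊢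
    rw [hsum, hx₁, hy₁, ← add_mul, hab, one_mul]
  · rcases eq_or_ne (w S) ⊤ with hS | hS
    · simp [hS]
    lift w S to ℝ using hS with s hs
    rw [hsum]
    exact_mod_cast key S s (sum_le_of_mem_EGP hx hs.symm) (sum_le_of_mem_EGP hy hs.symm)

variable [DecidableEq I]

theorem exists_base_of_submodular {g : Finset I → ℝ}
    (hg : ∀ S T, g (S ∪ T) + g (S ∩ T) ≤ g S + g T) (hg0 : g ∅ = 0) (T : Finset I) :
    ∃ x : I → ℝ, (∀ S, ∑ i ∈ S, x i ≤ g S) ∧ ∑ i, x i = g univ ∧ ∑ i ∈ T, x i = g T := by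
  suffices ∀ D, ∀ T ⊆ D, ∃ x : I → ℝ,
      (∀ S ⊆ D, ∑ i ∈ S, x i ≤ g S) ∧ ∑ i ∈ D, x i = g D ∧ ∑ i ∈ T, x i = g T by
    obtain ⟨x, hle, huniv, hT⟩ := this univ T (subset_univ T)
    exact ⟨x, fun S => hle S (subset_univ S), huniv, hT⟩
  intro D
  induction D using Finset.strongInduction with
  | H D ih =>
  intro T hTD
  rcases D.eq_empty_or_nonempty with rfl | ⟨b, hb⟩
  · refine ⟨0, fun S hS => ?_, by simp [hg0], by simp [subset_empty.1 hTD, hg0]⟩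
    simp [subset_empty.1 hS, hg0]
  obtain ⟨a, haD, haT⟩ : ∃ a ∈ D, a ∉ T ∨ T = D := by
    by_cases hT : T = D
    · exact ⟨b, hb, Or.inr hT⟩
    · obtain ⟨a, haD, haT⟩ := exists_of_ssubset (ssubset_of_subset_of_ne hTD hT)
      exact ⟨a, haD, Or.inl haT⟩
  obtain ⟨x, hle, hD', hT'⟩ := ih (D.erase a) (erase_ssubset haD) (T.erase a)
    (erase_subset_erase a hTD)
  set y := Function.update x a (g D - g (D.erase a))
  have hya : ∀ S, a ∈ S → ∑ i ∈ S, y i = g D - g (D.erase a) + ∑ i ∈ S.erase a, x i :=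
    fun S ha => by rw [sum_update_of_mem ha, sdiff_singleton_eq_erase]
  have hyD : ∑ i ∈ D, y i = g D := by rw [hya D haD, hD']; ring
  refine ⟨y, fun S hS => ?_, hyD, ?_⟩
  · by_cases ha : a ∈ S
    · have hsub := hg S (D.erase a)
      rw [union_erase_of_mem ha, union_eq_right.2 hS, inter_erase,
        inter_eq_left.2 hS] at hsub
      rw [hya S ha]
      linarith [hle (S.erase a) (erase_subset_erase a hS)]
    · rw [sum_update_of_notMem ha]
      exact hle S fun i hi => mem_erase.2 ⟨fun h => ha (h ▸ hi), hS hi⟩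
  · rcases haT with haT | rfl
    · rw [sum_update_of_notMem haT, ← erase_eq_of_notMem haT]
      exact hT'
    · exact hyD

lemma card_sdiff_union_add_card_sdiff_inter_le {α : Type*} [DecidableEq α]
    (B₁ B₂ S T : Finset α) :
    #((B₁ ∪ B₂) \ (S ∪ T)) + #((B₁ ∩ B₂) \ (S ∩ T)) ≤ #(B₁ \ S) + #(B₂ \ T) := by
  rw [← card_union_add_card_inter (B₁ \ S), ← card_union_add_card_inter ((B₁ ∪ B₂) \ (S ∪ T))]
  refine add_le_add (card_le_card fun t => ?_) (card_le_card fun t => ?_) <;>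
  · simp only [mem_union, mem_inter, mem_sdiff]
    tauto

/-- A real-valued submodular minorant of `w` when `M ≥ 0` and `w univ < ∞`; for large `M` it
agrees with `w` where `w` is finite and is large where `w = ∞`. -/
noncomputable def truncation (w : Finset I → WithTop ℝ) (M : ℝ) (T : Finset I) : ℝ :=
  if h : (univ.filter fun B => T ⊆ B ∧ w B ≠ ⊤).Nonempty then
    (univ.filter fun B => T ⊆ B ∧ w B ≠ ⊤).inf' h fun B => (w B).untopD 0 + M * #(B \ T)
  else 0

section Truncation

variable {M : ℝ} (hw : w univ ≠ ⊤)
include hw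

lemma truncation_filter_nonempty (T : Finset I) :
    (univ.filter fun B => T ⊆ B ∧ w B ≠ ⊤).Nonempty :=
  ⟨univ, mem_filter.2 ⟨mem_univ _, subset_univ T, hw⟩⟩

lemma truncation_le {T B : Finset I} (hTB : T ⊆ B) (hB : w B ≠ ⊤) :
    truncation w M T ≤ (w B).untopD 0 + M * #(B \ T) := by
  rw [truncation, dif_pos (truncation_filter_nonempty hw T)]
  exact inf'_le _ (mem_filter.2 ⟨mem_univ _, hTB, hB⟩)

lemma exists_truncation_eq (T : Finset I) :
    ∃ B, T ⊆ B ∧ w B ≠ ⊤ ∧ truncation w M T = (w B).untopD 0 + M * #(B \ T) := by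
  rw [truncation, dif_pos (truncation_filter_nonempty hw T)]
  obtain ⟨B, hB, hEq⟩ := exists_mem_eq_inf' (truncation_filter_nonempty hw T)
    fun B => (w B).untopD 0 + M * #(B \ T)
  exact ⟨B, (mem_filter.1 hB).2.1, (mem_filter.1 hB).2.2, hEq⟩

lemma coe_truncation_le (T : Finset I) : (truncation w M T : WithTop ℝ) ≤ w T := by
  rcases eq_or_ne (w T) ⊤ with hT | hT
  · simp [hT]
  have h := truncation_le (M := M) hw subset_rfl hT
  lift w T to ℝ using hT with t ht
  simpa using h

lemma truncation_univ : truncation w M univ = (w univ).untopD 0 := by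
  obtain ⟨B, hB, -, hEq⟩ := exists_truncation_eq (M := M) hw univ
  simpa [univ_subset_iff.1 hB] using hEq

lemma le_truncation {T : Finset I} {c : ℝ} (hM : 0 ≤ M) (hcT : (c : WithTop ℝ) ≤ w T)
    (hcM : ∀ B, w B ≠ ⊤ → c ≤ (w B).untopD 0 + M) : c ≤ truncation w M T := by
  obtain ⟨B, hTB, hB, hEq⟩ := exists_truncation_eq (M := M) hw T
  rw [hEq]
  rcases eq_or_ne B T with rfl | hBT
  · lift w B to ℝ using hB with b hb
    simpa using hcT
  · have hcard : (1 : ℝ) ≤ #(B \ T) := by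
      exact_mod_cast card_pos.2 (sdiff_nonempty.2 fun h => hBT (h.antisymm hTB))
    nlinarith [hcM B hB]

lemma truncation_submodular (hsub : Submodular w) (hM : 0 ≤ M) (S T : Finset I) :
    truncation w M (S ∪ T) + truncation w M (S ∩ T) ≤ truncation w M S + truncation w M T := by
  obtain ⟨B₁, hSB₁, hB₁, hEq₁⟩ := exists_truncation_eq (M := M) hw S
  obtain ⟨B₂, hTB₂, hB₂, hEq₂⟩ := exists_truncation_eq (M := M) hw T
  have hB := hsub B₁ B₂
  obtain ⟨hU, hI⟩ := WithTop.add_ne_top.1 (ne_top_of_le_ne_top (WithTop.add_ne_top.2 ⟨hB₁, hB₂⟩) hB)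
  have h₁ := truncation_le (M := M) hw (union_subset_union hSB₁ hTB₂) hU
  have h₂ := truncation_le (M := M) hw (inter_subset_inter hSB₁ hTB₂) hI
  have hcard' : (#((B₁ ∪ B₂) \ (S ∪ T)) : ℝ) + #((B₁ ∩ B₂) \ (S ∩ T)) ≤ #(B₁ \ S) + #(B₂ \ T) := by
    exact_mod_cast card_sdiff_union_add_card_sdiff_inter_le B₁ B₂ S T
  lift w B₁ to ℝ using hB₁ with b₁
  lift w B₂ to ℝ using hB₂ with b₂
  lift w (B₁ ∪ B₂) to ℝ using hU with u
  lift w (B₁ ∩ B₂) to ℝ using hI with v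
  norm_cast at hB
  simp only [WithTop.untopD_coe] at h₁ h₂ hEq₁ hEq₂
  rw [hEq₁, hEq₂]
  nlinarith [mul_le_mul_of_nonneg_left hcard' hM]

end Truncation

section Greedy

variable (hsub : Submodular w) (hw0 : w ∅ = 0) (hw : w univ ≠ ⊤)
include hsub hw0 hw

theorem exists_mem_EGP_le_sum (T : Finset I) {c : ℝ} (hc : (c : WithTop ℝ) ≤ w T) :
    ∃ x ∈ EGP w, c ≤ ∑ i ∈ T, x i := by
  obtain ⟨K, hK⟩ : ∃ K, ∀ B, |(w B).untopD 0| ≤ K :=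
    ⟨∑ B, |(w B).untopD 0|, fun B =>
      single_le_sum (f := fun B => |(w B).untopD 0|) (fun B _ => abs_nonneg _) (mem_univ B)⟩
  have hK0 : 0 ≤ K := (abs_nonneg _).trans (hK ∅)
  have hM : ∀ {d : ℝ}, d ≤ |c| → ∀ B, w B ≠ ⊤ → d ≤ (w B).untopD 0 + (K + |c|) :=
    fun hd B _ => by linarith [neg_abs_le ((w B).untopD 0), hK B]
  have h₀ : truncation w (K + |c|) ∅ = 0 := by
    refine le_antisymm ?_ ?_
    · exact_mod_cast hw0 ▸ coe_truncation_le hw ∅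
    · simpa using le_truncation (T := ∅) hw (by positivity) (by simp [hw0]) (hM (abs_nonneg c))
  obtain ⟨x, hle, huniv, hT⟩ := exists_base_of_submodular
    (truncation_submodular hw hsub (by positivity)) h₀ T
  refine ⟨x, ⟨?_, fun S => (WithTop.coe_le_coe.2 (hle S)).trans (coe_truncation_le hw S)⟩, ?_⟩
  · rw [huniv, truncation_univ hw]
    lift w univ to ℝ using hw with u
    rfl
  · exact hT ▸ le_truncation hw (by positivity) hc (hM (le_abs_self c))

lemma EGP_nonempty : (EGP w).Nonempty :=
  let ⟨x, hx, _⟩ := exists_mem_EGP_le_sum hsub hw0 hw ∅ (c := 0) (by simp [hw0])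
  ⟨x, hx⟩

lemma eq_of_forall_mem_EGP_sum_eq {T : Finset I} {v : ℝ}
    (h : ∀ x ∈ EGP w, ∑ i ∈ T, x i = v) : w T = v := by
  rcases eq_or_ne (w T) ⊤ with hT | hT
  · obtain ⟨x, hx, hle⟩ := exists_mem_EGP_le_sum hsub hw0 hw T (c := v + 1) (by simp [hT])
    linarith [h x hx]
  · lift w T to ℝ using hT with t ht
    obtain ⟨x, hx, hle⟩ := exists_mem_EGP_le_sum hsub hw0 hw T (c := t) ht.le
    have := sum_le_of_mem_EGP hx ht.symm
    rw [h x hx] at hle this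
    exact_mod_cast le_antisymm hle this

theorem splitsAlong_of_forall_mem_EGP {S : Finset I}
    (hS : ∀ x ∈ EGP w, ((∑ i ∈ S, x i : ℝ) : WithTop ℝ) = w S) : SplitsAlong w univ S Sᶜ := by
  obtain ⟨x₀, hx₀⟩ := EGP_nonempty hsub hw0 hw
  have hwS := (hS x₀ hx₀).symm
  have hwSc : w Sᶜ = ((w univ).untopD 0 - ∑ i ∈ S, x₀ i : ℝ) :=
    eq_of_forall_mem_EGP_sum_eq hsub hw0 hw fun x hx => by
      have h₁ := hx.1
      have h₂ := hS x hx
      lift w univ to ℝ using hw with u hu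
      rw [← sum_add_sum_compl S x] at h₁
      rw [hwS] at h₂
      norm_cast at h₁ h₂
      simp only [WithTop.untopD_coe]
      linarith
  rw [← union_compl S]
  refine hsub.splitsAlong_of_modular hw0 disjoint_compl_right ?_ (by rwa [union_compl])
  lift w univ to ℝ using hw with u hu
  rw [union_compl, ← hu, hwS, hwSc, WithTop.untopD_coe, ← WithTop.coe_add, add_sub_cancel]

/-- When no splitting of `w` separates `i` from `j`, some point of `Π(w)` has slack on every set
containing `i` but not `j`, and it can then be moved in the direction `eᵢ - eⱼ`. -/
theorem single_sub_single_mem_vectorSpan_EGP {i j : I}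
    (h : ∀ S, i ∈ S → j ∉ S → ¬ SplitsAlong w univ S Sᶜ) :
    Pi.single i (1 : ℝ) - Pi.single j 1 ∈ vectorSpan ℝ (EGP w) := by
  obtain ⟨x₀, hx₀⟩ := EGP_nonempty hsub hw0 hw
  have slack : ∀ S, ∃ y ∈ EGP w, ∃ δ > 0, i ∈ S → j ∉ S →
      ((∑ k ∈ S, y k + δ : ℝ) : WithTop ℝ) ≤ w S := by
    intro S
    by_cases hS : i ∈ S ∧ j ∉ S
    · obtain ⟨y, hy, hne⟩ : ∃ y ∈ EGP w, ((∑ k ∈ S, y k : ℝ) : WithTop ℝ) ≠ w S := by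
        by_contra! hforced
        exact h S hS.1 hS.2 (splitsAlong_of_forall_mem_EGP hsub hw0 hw hforced)
      rcases eq_or_ne (w S) ⊤ with htop | hfin
      · exact ⟨y, hy, 1, one_pos, fun _ _ => by simp [htop]⟩
      lift w S to ℝ using hfin with s hs
      have hlt : ∑ k ∈ S, y k < s :=
        lt_of_le_of_ne (sum_le_of_mem_EGP hy hs.symm) (by exact_mod_cast hne)
      exact ⟨y, hy, s - ∑ k ∈ S, y k, by linarith, fun _ _ => by norm_cast; linarith⟩
    · exact ⟨x₀, hx₀, 1, one_pos, fun hi hj => absurd ⟨hi, hj⟩ hS⟩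
  have uniform : ∀ G : Finset (Finset I), ∃ x ∈ EGP w, ∃ ε > 0, ∀ S ∈ G, i ∈ S → j ∉ S →
      ((∑ k ∈ S, x k + ε : ℝ) : WithTop ℝ) ≤ w S := by
    intro G
    induction G using Finset.induction_on with
    | empty => exact ⟨x₀, hx₀, 1, one_pos, by simp⟩
    | insert S G _ ih =>
      obtain ⟨x, hx, ε, hε, hxG⟩ := ih
      obtain ⟨y, hy, δ, hδ, hyS⟩ := slack S
      refine ⟨(2⁻¹ : ℝ) • x + (2⁻¹ : ℝ) • y,
        convex_EGP w hx hy (by norm_num) (by norm_num) (by norm_num), min ε δ / 2,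
        by positivity, fun S' hS' hi hj => ?_⟩
      rcases eq_or_ne (w S') ⊤ with htop | hfin
      · simp [htop]
      lift w S' to ℝ using hfin with s hs
      have hxs := sum_le_of_mem_EGP hx hs.symm
      have hys := sum_le_of_mem_EGP hy hs.symm
      simp only [Pi.add_apply, Pi.smul_apply, smul_eq_mul, sum_add_distrib, ← mul_sum]
      norm_cast
      rcases mem_insert.1 hS' with rfl | hS'
      · have := hyS hi hj
        rw [← hs] at this
        norm_cast at this
        linarith [min_le_right ε δ]
      · have := hxG S' hS' hi hj
        rw [← hs] at this
        norm_cast at this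
        linarith [min_le_left ε δ]
  obtain ⟨x, hx, ε, hε, hslack⟩ := uniform univ
  set d : I → ℝ := Pi.single i 1 - Pi.single j 1
  have hsum : ∀ S, ∑ k ∈ S, (x + ε • d) k =
      ∑ k ∈ S, x k + ε * ((if i ∈ S then 1 else 0) - (if j ∈ S then 1 else 0)) := fun S => by
    simp only [d, Pi.add_apply, Pi.smul_apply, Pi.sub_apply, smul_eq_mul, sum_add_distrib,
      ← mul_sum, sum_sub_distrib, sum_pi_single']
  have hmem : x + ε • d ∈ EGP w := by
    refine ⟨by rw [hsum]; simpa using hx.1, fun S => ?_⟩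
    rw [hsum]
    by_cases hij : i ∈ S ∧ j ∉ S
    · simpa [hij.1, hij.2] using hslack S (mem_univ S) hij.1 hij.2
    · have : ε * ((if i ∈ S then 1 else 0) - (if j ∈ S then 1 else 0)) ≤ 0 := by
        refine mul_nonpos_of_nonneg_of_nonpos hε.le ?_
        split_ifs <;> simp_all
      exact (WithTop.coe_le_coe.2 (by linarith)).trans (hx.2 S)
  have hd := Submodule.smul_mem _ ε⁻¹ (vsub_mem_vectorSpan ℝ hmem hx)
  rwa [vsub_eq_sub, add_sub_cancel_left, smul_smul, inv_mul_cancel₀ hε.ne', one_smul] at hd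

end Greedy

end EGP

section Face

variable {I : Type*} [Fintype I] [DecidableEq I] {z : Finset I → WithTop ℝ} {P : Preo I}

theorem compatible_of_phi_nonempty (hsub : Submodular z) (hne : (Phi z P).Nonempty) :
    Compatible z P := by
  obtain ⟨x, -, htight⟩ := hne
  refine ⟨fun A hA => htight A hA ▸ WithTop.coe_ne_top,
    fun A B hA hB hAB C₁ C₂ hd hun hnorel U hU => ?_⟩
  have hAfin : z A ≠ ⊤ := htight A hA ▸ WithTop.coe_ne_top
  have hcoRes : ∀ C ⊆ C₁ ∪ C₂, P.IsDownset (A ∪ C) →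
      coRes z A C = ((∑ i ∈ C, x i : ℝ) : WithTop ℝ) := fun C hC hAC =>
    coRes_eq_coe_sum (htight A hA) (htight _ hAC)
      (disjoint_sdiff.mono_right (hun ▸ hC))
  have h₁ := hcoRes C₁ subset_union_left
    (hA.union_of_disconnected hB hun fun x hx y hy => (hnorel x hx y hy).2)
  have h₂ := hcoRes C₂ subset_union_right
    (hA.union_of_disconnected hB ((union_comm _ _).trans hun) fun x hx y hy => (hnorel y hy x hx).1)
  have h₁₂ := hcoRes (C₁ ∪ C₂) subset_rfl (by rwa [hun, union_sdiff_of_subset hAB])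
  refine ((submodular_coRes hsub A).splitsAlong_of_modular (coRes_empty hAfin) hd ?_
    (h₁₂ ▸ WithTop.coe_ne_top)).2.2 U (hun ▸ hU)
  rw [h₁₂, h₁, h₂, sum_union hd, WithTop.coe_add]

lemma zP_add_zP_compl (hc : Compatible z P) {D : Finset I} (hD : ∀ a ∈ D, P.bubble a ⊆ D) :
    zP z P D + zP z P Dᶜ = zP z P univ := by
  rw [zP_inter_add_sdiff hc hD univ, univ_inter, ← compl_eq_univ_sdiff]

theorem phi_eq_EGP (hz0 : z ∅ = 0) (hsub : Submodular z) (hc : Compatible z P) :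
    Phi z P = EGP (zP z P) := by
  ext x
  constructor
  · rintro ⟨hx, htight⟩
    refine ⟨by rw [zP_univ hz0 hc]; exact hx.1, fun E => ?_⟩
    rw [← P.sum_bubbles_inter x E, WithTop.coe_sum]
    refine sum_le_sum fun C hC => ?_
    obtain ⟨a, rfl⟩ := P.mem_bubbles.1 hC
    exact coe_sum_le_coRes (htight _ (P.isDownset_downClosure_sdiff_bubble a)) (hx.2 _)
      (sdiff_disjoint.mono_right inter_subset_right)
  · intro hx
    refine ⟨EGP_mono (zP_le hz0 hsub hc) (zP_univ hz0 hc) hx, fun A hA => ?_⟩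
    rw [← zP_eq_of_isDownset hz0 hc hA]
    exact coe_sum_eq_of_mem_EGP hx (zP_add_zP_compl hc fun a ha => hA.bubble_subset ha)

end Face

section BubbleSum

variable {I : Type*} [Fintype I]

noncomputable def bubbleSum (P : Preo I) : (I → ℝ) →ₗ[ℝ] (P.bubbles → ℝ) where
  toFun v C := ∑ k ∈ (C : Finset I), v k
  map_add' u v := by
    ext
    simp [sum_add_distrib]
  map_smul' c v := by
    ext
    simp [mul_sum]

lemma bubbleSum_surjective (P : Preo I) : Function.Surjective (bubbleSum P) := by
  intro f
  refine ⟨fun k => f ⟨P.bubble k, P.bubble_mem_bubbles k⟩ / #(P.bubble k), ?_⟩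
  ext ⟨C, hC⟩
  obtain ⟨a, rfl⟩ := P.mem_bubbles.1 hC
  have hcard : (#(P.bubble a) : ℝ) ≠ 0 := by
    exact_mod_cast (card_pos.2 ⟨a, P.self_mem_bubble a⟩).ne'
  have hconst : ∀ k ∈ P.bubble a, f ⟨P.bubble k, P.bubble_mem_bubbles k⟩ / #(P.bubble k) =
      f ⟨P.bubble a, hC⟩ / #(P.bubble a) := fun k hk => by simp only [P.bubble_eq_of_mem hk]
  change ∑ k ∈ P.bubble a, _ = _
  rw [sum_congr rfl hconst, sum_const, nsmul_eq_mul, mul_div_cancel₀ _ hcard]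

lemma finrank_ker_bubbleSum (P : Preo I) :
    Module.finrank ℝ (LinearMap.ker (bubbleSum P)) = Fintype.card I - #P.bubbles := by
  have h := LinearMap.finrank_range_add_finrank_ker (bubbleSum P)
  rw [LinearMap.range_eq_top.2 (bubbleSum_surjective P), finrank_top, Module.finrank_pi,
    Module.finrank_pi, Fintype.card_coe] at h
  omega

lemma ker_bubbleSum_le_span [DecidableEq I] (P : Preo I) :
    LinearMap.ker (bubbleSum P) ≤
      Submodule.span ℝ {v | ∃ i j, P.bubRel i j ∧ v = Pi.single i 1 - Pi.single j 1} := by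
  intro v hv
  have hv' : ∀ a, ∑ k ∈ P.bubble a, v k = 0 := fun a =>
    congrFun (LinearMap.mem_ker.1 hv) ⟨P.bubble a, P.bubble_mem_bubbles a⟩
  have hdecomp : v = ∑ k, ∑ j ∈ P.bubble k,
      (v k / #(P.bubble k)) • (Pi.single k 1 - Pi.single j 1 : I → ℝ) := by
    ext t
    have hct : (#(P.bubble t) : ℝ) ≠ 0 := by
      exact_mod_cast (card_pos.2 ⟨t, P.self_mem_bubble t⟩).ne'
    have h₁ : ∑ k, ∑ j ∈ P.bubble k, v k / #(P.bubble k) * (Pi.single k 1 : I → ℝ) t = v t := by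
      rw [sum_eq_single t (fun k _ hk => by simp [Ne.symm hk]) (by simp)]
      simp only [Pi.single_eq_same, mul_one, sum_const, nsmul_eq_mul]
      field_simp
    have h₂ : ∑ k, ∑ j ∈ P.bubble k, v k / #(P.bubble k) * (Pi.single j 1 : I → ℝ) t = 0 := by
      calc ∑ k, ∑ j ∈ P.bubble k, v k / #(P.bubble k) * (Pi.single j 1 : I → ℝ) t
          = ∑ k, if k ∈ P.bubble t then v k / #(P.bubble k) else 0 := sum_congr rfl fun k _ => by
            simp only [Pi.single_apply, sum_ite_eq, ← P.mem_bubble_comm, mul_ite,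
              mul_one, mul_zero]
        _ = ∑ k ∈ P.bubble t, v k / #(P.bubble t) := by
          rw [sum_ite_mem, univ_inter]
          exact sum_congr rfl fun k hk => by rw [P.bubble_eq_of_mem hk]
        _ = 0 := by rw [← sum_div, hv', zero_div]
    simp only [Finset.sum_apply, Pi.smul_apply, Pi.sub_apply, smul_eq_mul, mul_sub,
      sum_sub_distrib, h₁, h₂, sub_zero]
  rw [hdecomp]
  refine Submodule.sum_mem _ fun k _ => Submodule.sum_mem _ fun j hj => Submodule.smul_mem _ _ ?_
  exact Submodule.subset_span ⟨k, j, P.mem_bubble.1 hj, rfl⟩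

end BubbleSum

section Dimension

variable {I : Type*} [Fintype I] [DecidableEq I] {z : Finset I → WithTop ℝ} {P : Preo I}

lemma Conforms.not_splitsAlong_zP (hconf : Conforms z P) {i j : I} (hij : P.bubRel i j)
    {S : Finset I} (hi : i ∈ S) (hj : j ∉ S) : ¬ SplitsAlong (zP z P) univ S Sᶜ := by
  intro hsplit
  have hc := hconf.1
  have hjC : j ∈ P.bubble i := P.mem_bubble.2 hij
  refine (hconf.2 (P.bubble i) (P.convexF_bubble i) (P.bubble i ∩ S) (P.bubble i ∩ Sᶜ)
    ((disjoint_compl_right (a := S)).mono inter_subset_right inter_subset_right)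
    (by rw [← inter_union_distrib_left, union_compl, inter_univ]) (fun U hU => ?_) i
    (mem_inter.2 ⟨P.self_mem_bubble i, hi⟩) j (mem_inter.2 ⟨hjC, mem_compl.2 hj⟩)).1 hij.1
  rw [← inter_assoc, ← inter_assoc, inter_eq_left.2 hU,
    ← zP_of_subset_bubble hc hU, ← zP_of_subset_bubble hc (inter_subset_left.trans hU),
    ← zP_of_subset_bubble hc (inter_subset_left.trans hU)]
  exact hsplit.2.2 U (subset_univ U)

theorem vectorSpan_EGP_zP (hz0 : z ∅ = 0) (hzI : z univ ≠ ⊤) (hsub : Submodular z)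
    (hconf : Conforms z P) : vectorSpan ℝ (EGP (zP z P)) = LinearMap.ker (bubbleSum P) := by
  have hc := hconf.1
  refine le_antisymm ?_ ((ker_bubbleSum_le_span P).trans (Submodule.span_le.2 ?_))
  · rw [vectorSpan_def, Submodule.span_le]
    rintro _ ⟨x, hx, y, hy, rfl⟩
    ext ⟨C, hC⟩
    obtain ⟨a, rfl⟩ := P.mem_bubbles.1 hC
    have hsat : ∀ b ∈ P.bubble a, P.bubble b ⊆ P.bubble a := fun b hb => (P.bubble_eq_of_mem hb).le
    have hxy := (coe_sum_eq_of_mem_EGP hx (zP_add_zP_compl hc hsat)).trans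
      (coe_sum_eq_of_mem_EGP hy (zP_add_zP_compl hc hsat)).symm
    change ∑ k ∈ P.bubble a, (x - y) k = 0
    rw [Pi.sub_def, sum_sub_distrib, WithTop.coe_eq_coe.1 hxy, sub_self]
  · rintro _ ⟨i, j, hij, rfl⟩
    exact single_sub_single_mem_vectorSpan_EGP (zP_submodular hsub) (zP_empty hc)
      (by rwa [zP_univ hz0 hc]) fun S hi hj => hconf.not_splitsAlong_zP hij hi hj

end Dimension

/-- For a submodular `z` and a preorder `P` on `I`: the face `Φ_z(P)`
is nonempty iff `P` is compatible with `z`; in that case `Φ_z(P) = Π(z_P)`; and if `P`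
conforms to `z` then `dim Φ_z(P) = |I| − |b(P)|`. -/
theorem phi_nonempty_iff_compatible
    {I : Type*} [Fintype I] [DecidableEq I]
    (z : Finset I → WithTop ℝ) (hz0 : z ∅ = 0) (hzI : z Finset.univ ≠ ⊤)
    (hsub : Submodular z) (P : Preo I) :
    ((Phi z P).Nonempty ↔ Compatible z P) ∧
    (Compatible z P → Phi z P = EGP (zP z P)) ∧
    (Conforms z P →
      Module.finrank ℝ (affineSpan ℝ (Phi z P)).direction =
        Fintype.card I - P.bubbles.card) := by
  have hΦ : Compatible z P → Phi z P = EGP (zP z P) := phi_eq_EGP hz0 hsub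
  refine ⟨⟨compatible_of_phi_nonempty hsub, fun hc => ?_⟩, hΦ, fun hconf => ?_⟩
  · rw [hΦ hc]
    exact EGP_nonempty (zP_submodular hsub) (zP_empty hc) (by rwa [zP_univ hz0 hc])
  · rw [hΦ hconf.1, direction_affineSpan, vectorSpan_EGP_zP hz0 hzI hsub hconf,
      finrank_ker_bubbleSum]
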